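/- Explicit description of the gauge group H (formula (4) of the paper): a proper orthochronous Lorentz transformation Λ satisfies (Λl)∧(Λm) = c·(l∧m) for some c ∈ ℂ with |c| = 1 (i.e. Λ preserves the 2-form l∧m modulo U(1)) if and only if Λ = B(f)R(φ) for some f ∈ ℂ and φ ∈ ℝ. -/

import Mathlib

noncomputable section

open scoped Matrix

/-- η := diag(1,−1,−1,−1). -/
def ηM : Matrix (Fin 4) (Fin 4) ℝ :=
  !![1, 0, 0, 0; 0, -1, 0, 0; 0, 0, -1, 0; 0, 0, 0, -1]

/-- Λ is a proper orthochronous Lorentz transformation. -/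
def IsLorentz (Λ : Matrix (Fin 4) (Fin 4) ℝ) : Prop :=
  Λᵀ * ηM * Λ = ηM ∧ Λ.det = 1 ∧ 0 < Λ 0 0

/-- Complexification of a real matrix. -/
def toC (Λ : Matrix (Fin 4) (Fin 4) ℝ) : Matrix (Fin 4) (Fin 4) ℂ :=
  Λ.map (fun t => (t : ℂ))

/-- l := e₀ + e₃. -/
def lV : Fin 4 → ℂ := ![1, 0, 0, 1]

/-- m := e₁ + ie₂. -/
def mV : Fin 4 → ℂ := ![0, 1, Complex.I, 0]

/-- m̄ := e₁ − ie₂. -/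
def mbV : Fin 4 → ℂ := ![0, 1, -Complex.I, 0]

/-- n := e₀ − e₃. -/
def nV : Fin 4 → ℂ := ![1, 0, 0, -1]

/-- The 2-form l∧m, identified with the antisymmetric matrix l mᵀ − m lᵀ. -/
def lmWedge : Matrix (Fin 4) (Fin 4) ℂ :=
  Matrix.vecMulVec lV mV - Matrix.vecMulVec mV lV

/-- The real 4×4 matrix B(f): B(f)l = l, B(f)m = m + f l, B(f)m̄ = m̄ + f̄ l,
B(f)n = n + f m̄ + f̄ m + |f|² l. -/
def Bmat (f : ℂ) : Matrix (Fin 4) (Fin 4) ℝ :=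
  !![1 + Complex.normSq f / 2, f.re, f.im, -(Complex.normSq f / 2);
     f.re, 1, 0, -f.re;
     f.im, 0, 1, -f.im;
     Complex.normSq f / 2, f.re, f.im, 1 - Complex.normSq f / 2]

/-- The rotation R(φ) by angle φ in the e₁,e₂-plane: R(φ)l = l, R(φ)n = n,
R(φ)m = e^{iφ} m. -/
def Rmat (φ : ℝ) : Matrix (Fin 4) (Fin 4) ℝ :=
  !![1, 0, 0, 0;
     0, Real.cos φ, Real.sin φ, 0;
     0, -Real.sin φ, Real.cos φ, 0;
     0, 0, 0, 1]

/-!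
Contracting (Λl)∧(Λm) = c·(l∧m) with η(Λm̄) and with η(Λn) shows that Λl and Λm lie in
span{l, m}, since Λ preserves the η-products of the null tetrad. Being real, Λl is then a multiple
u·l, and writing Λm = γl + δm, comparing wedges gives uδ = c while η(Λm, Λm̄) = η(m, m̄) gives
|δ| = 1; so |u| = 1 and orthochronicity forces u = 1. Now B(γ/δ)R(arg δ) acts on l and m exactly
as Λ does, and a Lorentz transformation fixing l and m (hence e₁, e₂ and, by orthogonality, e₀)
is the identity.
-/

open Matrix Complex

section Wedge

variable {n R : Type*} [CommRing R]

def wedge (x y : n → R) : Matrix n n R :=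
  vecMulVec x y - vecMulVec y x

theorem mul_wedge_mul_transpose [Fintype n] (M : Matrix n n R) (x y : n → R) :
    M * wedge x y * Mᵀ = wedge (M *ᵥ x) (M *ᵥ y) := by
  simp only [wedge, Matrix.mul_sub, Matrix.sub_mul, mul_vecMulVec, vecMulVec_mul,
    vecMul_transpose]

theorem wedge_mulVec [Fintype n] (x y z : n → R) :
    wedge x y *ᵥ z = (y ⬝ᵥ z) • x - (x ⬝ᵥ z) • y := by
  ext i
  simp only [wedge, sub_mulVec, vecMulVec_mulVec, Pi.sub_apply, Pi.smul_apply, smul_eq_mul,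
    MulOpposite.smul_eq_mul_unop, MulOpposite.unop_op]
  ring

theorem wedge_smul_left (x y : n → R) (α : R) : wedge (α • x) y = α • wedge x y := by
  simp only [wedge, vecMulVec_smul, smul_vecMulVec, smul_sub]

theorem wedge_smul_add (x y : n → R) (γ δ : R) :
    wedge x (γ • x + δ • y) = δ • wedge x y := by
  ext i j
  simp only [wedge, Matrix.sub_apply, vecMulVec_apply, Matrix.smul_apply, Pi.add_apply,
    Pi.smul_apply, smul_eq_mul]
  ring

theorem wedge_neg_comm (x y : n → R) : wedge y x = -wedge x y :=
  (neg_sub _ _).symm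

theorem exists_eq_smul_add_smul_of_wedge_eq [Fintype n] {K : Type*} [Field K]
    {a b x y : n → K} {c : K} (h : wedge a b = c • wedge x y) {z : n → K}
    (ha : a ⬝ᵥ z = 0) (hb : b ⬝ᵥ z ≠ 0) :
    ∃ α β : K, a = α • x + β • y := by
  have hz := congrArg (· *ᵥ z) h
  simp only [smul_mulVec, wedge_mulVec, ha, zero_smul, sub_zero] at hz
  refine ⟨(b ⬝ᵥ z)⁻¹ * c * (y ⬝ᵥ z), -((b ⬝ᵥ z)⁻¹ * c * (x ⬝ᵥ z)), ?_⟩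
  rw [← inv_smul_smul₀ hb a, hz]
  ext i
  simp only [Pi.smul_apply, Pi.sub_apply, Pi.add_apply, smul_eq_mul]
  ring

end Wedge

theorem mul_transpose_eq_of_transpose_mul_eq {n R : Type*} [Fintype n] [DecidableEq n]
    [CommRing R] {η Λ : Matrix n n R} (hη : η * η = 1) (h : Λᵀ * η * Λ = η) :
    Λ * η * Λᵀ = η := by
  have hinv : Λ * (η * Λᵀ * η) = 1 :=
    mul_eq_one_comm.mp <| by
      rw [Matrix.mul_assoc, Matrix.mul_assoc, ← Matrix.mul_assoc Λᵀ, h, hη]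
  calc Λ * η * Λᵀ = Λ * (η * Λᵀ * η) * η := by
        simp only [Matrix.mul_assoc, hη, Matrix.mul_one]
    _ = η := by rw [hinv, Matrix.one_mul]

theorem isometry_mul {n R : Type*} [Fintype n] [CommRing R]
    {η A B : Matrix n n R} (hA : Aᵀ * η * A = η) (hB : Bᵀ * η * B = η) :
    (A * B)ᵀ * η * (A * B) = η := by
  calc (A * B)ᵀ * η * (A * B) = Bᵀ * (Aᵀ * η * A) * B := by
        simp only [transpose_mul, Matrix.mul_assoc]
    _ = η := by rw [hA, hB]

section Complexification

theorem toC_mul (A B : Matrix (Fin 4) (Fin 4) ℝ) : toC (A * B) = toC A * toC B :=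
  Matrix.map_mul (f := ofRealHom)

theorem toC_mul_mulVec (A B : Matrix (Fin 4) (Fin 4) ℝ) (v : Fin 4 → ℂ) :
    toC (A * B) *ᵥ v = toC A *ᵥ (toC B *ᵥ v) := by
  rw [toC_mul, mulVec_mulVec]

theorem toC_one : toC 1 = 1 :=
  Matrix.map_one _ ofReal_zero ofReal_one

theorem toC_transpose (A : Matrix (Fin 4) (Fin 4) ℝ) : toC Aᵀ = (toC A)ᵀ :=
  transpose_map

theorem toC_mulVec_star (Λ : Matrix (Fin 4) (Fin 4) ℝ) (v : Fin 4 → ℂ) :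
    toC Λ *ᵥ star v = star (toC Λ *ᵥ v) := by
  have : (toC Λ)ᴴ = (toC Λ)ᵀ := by ext; simp [toC, conjTranspose_apply]
  rw [star_mulVec, this, vecMul_transpose]

theorem toC_mulVec_lV_apply (Λ : Matrix (Fin 4) (Fin 4) ℝ) (i : Fin 4) :
    (toC Λ *ᵥ lV) i = ↑(Λ i 0 + Λ i 3) := by
  simp [toC, lV, mulVec, dotProduct, Fin.sum_univ_four]

end Complexification

def minkowski (x y : Fin 4 → ℂ) : ℂ :=
  x ⬝ᵥ (toC ηM *ᵥ y)

theorem minkowski_toC_mulVec {Λ : Matrix (Fin 4) (Fin 4) ℝ} (h : Λᵀ * ηM * Λ = ηM)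
    (x y : Fin 4 → ℂ) : minkowski (toC Λ *ᵥ x) (toC Λ *ᵥ y) = minkowski x y := by
  have hC : (toC Λ)ᵀ * toC ηM * toC Λ = toC ηM := by
    rw [← toC_transpose, ← toC_mul, ← toC_mul, h]
  rw [minkowski, minkowski, mulVec_mulVec, dotProduct_mulVec, ← vecMul_transpose, vecMul_vecMul,
    ← Matrix.mul_assoc, hC, ← dotProduct_mulVec]

section Tetrad

theorem star_lV : star lV = lV := by
  ext i; fin_cases i <;> simp [lV]

theorem star_mV : star mV = mbV := by
  ext i; fin_cases i <;> simp [mV, mbV]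

theorem wedge_lV_mV_ne_zero : wedge lV mV ≠ 0 := fun h => by
  simpa [wedge, lV, mV, vecMulVec_apply] using congrFun (congrFun h 0) 1

theorem minkowski_lV_mbV : minkowski lV mbV = 0 := by
  simp [minkowski, toC, ηM, lV, mbV, mulVec, dotProduct, Fin.sum_univ_four]

theorem minkowski_mV_mbV : minkowski mV mbV = -2 := by
  simp [minkowski, toC, ηM, mV, mbV, mulVec, dotProduct, Fin.sum_univ_four, ← two_mul]

theorem minkowski_lV_nV : minkowski lV nV = 2 := by
  simp [minkowski, toC, ηM, lV, nV, mulVec, dotProduct, Fin.sum_univ_four, one_add_one_eq_two]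

theorem minkowski_mV_nV : minkowski mV nV = 0 := by
  simp [minkowski, toC, ηM, mV, nV, mulVec, dotProduct, Fin.sum_univ_four]

theorem minkowski_smul_add_smul (γ δ γ' δ' : ℂ) :
    minkowski (γ • lV + δ • mV) (γ' • lV + δ' • mbV) = -2 * δ * δ' := by
  simp [minkowski, toC, ηM, lV, mV, mbV, mulVec, dotProduct, Fin.sum_univ_four]
  linear_combination δ * δ' * I_sq

theorem smul_mV_eq_zero_of_star_eq {v : Fin 4 → ℂ} (hv : star v = v) {α β : ℂ}
    (h : v = α • lV + β • mV) : β = 0 := by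
  have h1 : star β = β := by simpa [h, lV, mV] using congrFun hv 1
  have h2 : -(star β * I) = β * I := by simpa [h, lV, mV] using congrFun hv 2
  rw [h1] at h2
  simpa using (show β * I = 0 by linear_combination (-1 / 2) * h2)

end Tetrad

section Lorentz

theorem ηM_transpose : ηMᵀ = ηM := by
  ext i j; fin_cases i <;> fin_cases j <;> rfl

theorem ηM_mul_self : ηM * ηM = 1 := by
  ext i j; fin_cases i <;> fin_cases j <;> simp [ηM, mul_apply, Fin.sum_univ_four, one_apply]

theorem IsLorentz.zero_lt_add {Λ : Matrix (Fin 4) (Fin 4) ℝ} (hΛ : IsLorentz Λ) :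
    0 < Λ 0 0 + Λ 0 3 := by
  have h : Λ 0 0 * Λ 0 0 - Λ 0 1 * Λ 0 1 - Λ 0 2 * Λ 0 2 - Λ 0 3 * Λ 0 3 = 1 := by
    simpa [ηM, mul_apply, Fin.sum_univ_four, sub_eq_add_neg] using
      congrFun₂ (mul_transpose_eq_of_transpose_mul_eq ηM_mul_self hΛ.1) 0 0
  nlinarith [hΛ.2.2, sq_nonneg (Λ 0 1), sq_nonneg (Λ 0 2)]

theorem Bmat_isometry (f : ℂ) : (Bmat f)ᵀ * ηM * Bmat f = ηM := by
  ext i j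
  fin_cases i <;> fin_cases j <;> simp [Bmat, ηM, mul_apply, Fin.sum_univ_four, normSq_apply] <;>
    ring

theorem Rmat_isometry (φ : ℝ) : (Rmat φ)ᵀ * ηM * Rmat φ = ηM := by
  ext i j
  fin_cases i <;> fin_cases j <;> simp [Rmat, ηM, mul_apply, Fin.sum_univ_four] <;>
    nlinarith [Real.sin_sq_add_cos_sq φ]

theorem toC_Bmat_mulVec_lV (f : ℂ) : toC (Bmat f) *ᵥ lV = lV := by
  ext i; fin_cases i <;> simp [toC, Bmat, lV, mulVec, dotProduct, Fin.sum_univ_four]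

theorem toC_Bmat_mulVec_mV (f : ℂ) : toC (Bmat f) *ᵥ mV = f • lV + mV := by
  ext i; fin_cases i <;> simp [toC, Bmat, lV, mV, mulVec, dotProduct, Fin.sum_univ_four]

theorem toC_Rmat_mulVec_lV (φ : ℝ) : toC (Rmat φ) *ᵥ lV = lV := by
  ext i; fin_cases i <;> simp [toC, Rmat, lV, mulVec, dotProduct, Fin.sum_univ_four]

theorem toC_Rmat_mulVec_mV (φ : ℝ) : toC (Rmat φ) *ᵥ mV = exp (φ * I) • mV := by
  ext i
  fin_cases i <;>
    simp [toC, Rmat, mV, mulVec, dotProduct, Fin.sum_univ_four, exp_mul_I, Complex.ext_iff]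

theorem eq_one_of_mulVec_lV_of_mulVec_mV {M : Matrix (Fin 4) (Fin 4) ℝ}
    (h : Mᵀ * ηM * M = ηM) (hl : toC M *ᵥ lV = lV) (hm : toC M *ᵥ mV = mV) : M = 1 := by
  obtain ⟨l0, l1, l2, l3⟩ :
      M 0 0 + M 0 3 = 1 ∧ M 1 0 + M 1 3 = 0 ∧ M 2 0 + M 2 3 = 0 ∧ M 3 0 + M 3 3 = 1 := by
    simpa [Fin.forall_fin_succ, toC, lV, mulVec, dotProduct, Fin.sum_univ_four, Complex.ext_iff]
      using congrFun hl
  obtain ⟨⟨m01, m02⟩, ⟨m11, m12⟩, ⟨m21, m22⟩, m31, m32⟩ :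
      (M 0 1 = 0 ∧ M 0 2 = 0) ∧ (M 1 1 = 1 ∧ M 1 2 = 0) ∧ (M 2 1 = 0 ∧ M 2 2 = 1) ∧
        M 3 1 = 0 ∧ M 3 2 = 0 := by
    simpa [Fin.forall_fin_succ, toC, mV, mulVec, dotProduct, Fin.sum_univ_four, Complex.ext_iff]
      using congrFun hm
  -- the column x = M e₀ is η-orthogonal to e₁, e₂, with ⟨x, x⟩ = 1 and ⟨x, l - x⟩ = 0
  have h10 : M 1 0 = 0 := by
    simpa [ηM, mul_apply, Fin.sum_univ_four, m01, m11, m21, m31] using congrFun₂ h 0 1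
  have h20 : M 2 0 = 0 := by
    simpa [ηM, mul_apply, Fin.sum_univ_four, m02, m12, m22, m32] using congrFun₂ h 0 2
  have h00 : M 0 0 * M 0 0 - M 3 0 * M 3 0 = 1 := by
    simpa [ηM, mul_apply, Fin.sum_univ_four, h10, h20, sub_eq_add_neg] using congrFun₂ h 0 0
  have h03 : M 0 0 * M 0 3 - M 3 0 * M 3 3 = 0 := by
    simpa [ηM, mul_apply, Fin.sum_univ_four, h10, h20, sub_eq_add_neg] using congrFun₂ h 0 3
  have hdiff : M 0 0 - M 3 0 = 1 := by
    linear_combination h03 + h00 - M 0 0 * l0 + M 3 0 * l3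
  have hsum : M 0 0 + M 3 0 = 1 := by
    linear_combination h00 - (M 0 0 + M 3 0) * hdiff
  ext i j
  fin_cases i <;> fin_cases j <;> simp [one_apply, *] <;> linarith

theorem eq_of_mulVec_lV_of_mulVec_mV {Λ Λ' : Matrix (Fin 4) (Fin 4) ℝ}
    (hΛ : Λᵀ * ηM * Λ = ηM) (hΛ' : Λ'ᵀ * ηM * Λ' = ηM)
    (hl : toC Λ *ᵥ lV = toC Λ' *ᵥ lV) (hm : toC Λ *ᵥ mV = toC Λ' *ᵥ mV) : Λ = Λ' := by
  set N := ηM * Λ'ᵀ * ηM with hN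
  have hNΛ' : N * Λ' = 1 := by
    rw [hN, Matrix.mul_assoc, Matrix.mul_assoc, ← Matrix.mul_assoc Λ'ᵀ, hΛ', ηM_mul_self]
  have hΛ'N : Λ' * N = 1 := mul_eq_one_comm.mp hNΛ'
  have hNη : Nᵀ * ηM * N = ηM := by
    calc Nᵀ * ηM * N = ηM * (Λ' * N) := by
          simp only [hN, transpose_mul, ηM_transpose, transpose_transpose, Matrix.mul_assoc]
          rw [← Matrix.mul_assoc ηM ηM, ηM_mul_self, Matrix.one_mul]
      _ = ηM := by rw [hΛ'N, Matrix.mul_one]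
  have hfix : ∀ v, toC Λ *ᵥ v = toC Λ' *ᵥ v → toC (N * Λ) *ᵥ v = v := fun v hv => by
    rw [toC_mul_mulVec, hv, ← toC_mul_mulVec, hNΛ', toC_one, one_mulVec]
  have hNΛ : N * Λ = 1 := eq_one_of_mulVec_lV_of_mulVec_mV
    (isometry_mul hNη hΛ) (hfix _ hl) (hfix _ hm)
  calc Λ = Λ' * N * Λ := by rw [hΛ'N, Matrix.one_mul]
    _ = Λ' := by rw [Matrix.mul_assoc, hNΛ, Matrix.mul_one]

end Lorentz

section GaugeGroup

variable {Λ : Matrix (Fin 4) (Fin 4) ℝ} {c : ℂ}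

theorem mulVec_lV_eq_smul_of_wedge_eq (hΛ : Λᵀ * ηM * Λ = ηM)
    (h : wedge (toC Λ *ᵥ lV) (toC Λ *ᵥ mV) = c • wedge lV mV) :
    toC Λ *ᵥ lV = (↑(Λ 0 0 + Λ 0 3) : ℂ) • lV := by
  obtain ⟨α, β, hαβ⟩ :=
    exists_eq_smul_add_smul_of_wedge_eq h (z := toC ηM *ᵥ (toC Λ *ᵥ mbV))
    ((minkowski_toC_mulVec hΛ _ _).trans minkowski_lV_mbV)
    (by rw [← minkowski, minkowski_toC_mulVec hΛ, minkowski_mV_mbV]; norm_num)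
  have hβ : β = 0 := smul_mV_eq_zero_of_star_eq (by rw [← toC_mulVec_star, star_lV]) hαβ
  rw [hβ, zero_smul, add_zero] at hαβ
  have hα : α = ↑(Λ 0 0 + Λ 0 3) := by
    simpa [lV] using (congrFun hαβ 0).symm.trans (toC_mulVec_lV_apply Λ 0)
  rw [hαβ, hα]

theorem exists_mulVec_mV_eq_of_wedge_eq (hΛ : Λᵀ * ηM * Λ = ηM)
    (h : wedge (toC Λ *ᵥ lV) (toC Λ *ᵥ mV) = c • wedge lV mV) :
    ∃ γ δ : ℂ, toC Λ *ᵥ mV = γ • lV + δ • mV :=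
  exists_eq_smul_add_smul_of_wedge_eq (by rw [wedge_neg_comm, h, neg_smul])
    (z := toC ηM *ᵥ (toC Λ *ᵥ nV))
    ((minkowski_toC_mulVec hΛ _ _).trans minkowski_mV_nV)
    (by rw [← minkowski, minkowski_toC_mulVec hΛ, minkowski_lV_nV]; norm_num)

theorem norm_eq_one_of_mulVec_mV_eq (hΛ : Λᵀ * ηM * Λ = ηM) {γ δ : ℂ}
    (h : toC Λ *ᵥ mV = γ • lV + δ • mV) : ‖δ‖ = 1 := by
  have hm := minkowski_toC_mulVec hΛ mV mbV
  rw [minkowski_mV_mbV, ← star_mV, toC_mulVec_star, h, star_add, star_smul, star_smul, star_lV,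
    star_mV, minkowski_smul_add_smul, star_def, mul_assoc, mul_conj'] at hm
  have hsq : ‖δ‖ ^ 2 = 1 := by
    exact_mod_cast (show (‖δ‖ : ℂ) ^ 2 = 1 by linear_combination (-1 / 2) * hm)
  exact (pow_eq_one_iff_of_nonneg (norm_nonneg δ) two_ne_zero).mp hsq

theorem mulVec_eq_of_wedge_eq (hΛ : IsLorentz Λ) (hc : ‖c‖ = 1)
    (h : wedge (toC Λ *ᵥ lV) (toC Λ *ᵥ mV) = c • wedge lV mV) :
    toC Λ *ᵥ lV = lV ∧
      ∃ γ δ : ℂ, ‖δ‖ = 1 ∧ toC Λ *ᵥ mV = γ • lV + δ • mV := by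
  have hl := mulVec_lV_eq_smul_of_wedge_eq hΛ.1 h
  obtain ⟨γ, δ, hm⟩ := exists_mulVec_mV_eq_of_wedge_eq hΛ.1 h
  have hδ := norm_eq_one_of_mulVec_mV_eq hΛ.1 hm
  have hc' : (↑(Λ 0 0 + Λ 0 3) * δ : ℂ) = c := by
    apply smul_left_injective ℂ wedge_lV_mV_ne_zero
    simp only [← h, hl, hm, wedge_smul_left, wedge_smul_add, smul_smul]
  have hu : Λ 0 0 + Λ 0 3 = 1 := by
    have := congrArg norm hc'
    rwa [norm_mul, hδ, mul_one, hc, Complex.norm_of_nonneg hΛ.zero_lt_add.le] at this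
  exact ⟨by rw [hl, hu, ofReal_one, one_smul], γ, δ, hδ, hm⟩

theorem eq_Bmat_mul_Rmat (hΛ : Λᵀ * ηM * Λ = ηM) (hl : toC Λ *ᵥ lV = lV) {γ δ : ℂ}
    (hm : toC Λ *ᵥ mV = γ • lV + δ • mV) (hδ : ‖δ‖ = 1) :
    Λ = Bmat (γ / δ) * Rmat (arg δ) := by
  apply eq_of_mulVec_lV_of_mulVec_mV hΛ (isometry_mul (Bmat_isometry _) (Rmat_isometry _))
  · rw [hl, toC_mul_mulVec, toC_Rmat_mulVec_lV, toC_Bmat_mulVec_lV]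
  · have hexp : exp (arg δ * I) = δ := by simpa [hδ] using norm_mul_exp_arg_mul_I δ
    have hδ0 : δ ≠ 0 := norm_ne_zero_iff.mp (by rw [hδ]; exact one_ne_zero)
    rw [hm, toC_mul_mulVec, toC_Rmat_mulVec_mV, mulVec_smul, toC_Bmat_mulVec_mV, hexp, smul_add,
      smul_smul, mul_div_cancel₀ _ hδ0]

theorem wedge_mulVec_Bmat_mul_Rmat (f : ℂ) (φ : ℝ) :
    wedge (toC (Bmat f * Rmat φ) *ᵥ lV) (toC (Bmat f * Rmat φ) *ᵥ mV) =
      exp (φ * I) • wedge lV mV := by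
  rw [toC_mul_mulVec, toC_mul_mulVec, toC_Rmat_mulVec_lV, toC_Bmat_mulVec_lV, toC_Rmat_mulVec_mV,
    mulVec_smul, toC_Bmat_mulVec_mV, smul_add, smul_smul, wedge_smul_add]

end GaugeGroup

/-- Explicit description of the gauge group H (formula (4) of the paper): a proper
orthochronous Lorentz transformation Λ preserves l∧m modulo U(1) if and only if
Λ = B(f)R(φ) for some f ∈ ℂ, φ ∈ ℝ. -/
theorem gauge_group_H_explicit (Λ : Matrix (Fin 4) (Fin 4) ℝ) (hΛ : IsLorentz Λ) :
    (∃ c : ℂ, ‖c‖ = 1 ∧ toC Λ * lmWedge * (toC Λ)ᵀ = c • lmWedge) ↔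
    (∃ (f : ℂ) (φ : ℝ), Λ = Bmat f * Rmat φ) := by
  rw [show lmWedge = wedge lV mV from rfl, mul_wedge_mul_transpose]
  constructor
  · rintro ⟨c, hc, h⟩
    obtain ⟨hl, γ, δ, hδ, hm⟩ := mulVec_eq_of_wedge_eq hΛ hc h
    exact ⟨γ / δ, arg δ, eq_Bmat_mul_Rmat hΛ.1 hl hm hδ⟩
  · rintro ⟨f, φ, rfl⟩
    exact ⟨exp (φ * I), norm_exp_ofReal_mul_I φ, wedge_mulVec_Bmat_mul_Rmat f φ⟩
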